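/- arXiv:2410.16112 — 2 statements merged into one kernel-verified Lean document; each statement's English description precedes it below -/
import Mathlib

section
/- Bias correction term for the treatment moment (Lemma 'Bias Correction Terms', second component): E[(1/T)·Σ_{t=1}^{T} D̃_t·ε̃_t] = −ρ₂·(σ_ε²/T²)·Σ_{l=0}^{T-2} Σ_{j=0}^{l} φ^j; that is, it equals ρ₂ times the bias correction term E[(1/T)·Σ_{t=1}^{T} Ỹ_{t-1}·ε̃_t] for the lagged-outcome moment. -/
/-!
Substituting the treatment equation into the outcome equation gives the reduced form
`Y (k + 1) = (a + τ c) + φ Y k + (ε (k + 1) + τ u (k + 1))`, an AR(1) recursion whose innovation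
at date `s` is correlated with `ε t` only for `s = t`; hence `E[Y k ε t] = φ ^ (k - t) σ_ε²` for
`t ≤ k` and `0` otherwise. As `D s = c + ρ₂ Y (s - 1) + u s` with `u s` independent of the
centred `ε t`, `E[D s ε t] = ρ₂ E[Y (s - 1) ε t]`. A within moment is a fixed linear combination
`(1/T) (∑ₜ E[xₜ εₜ] - (1/T) ∑ₛ ∑ᵣ E[xₛ εᵣ])` of such cross moments, so the `D` moment is `ρ₂` times
the `Y` moment. In the latter the diagonal vanishes, and summing the geometric weights over the
pairs `r < s` gives `σ_ε² ∑_{l < T - 1} ∑_{j ≤ l} φ ^ j`.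
-/

open Finset MeasureTheory ProbabilityTheory

theorem sum_sub_mean_mul_sub_mean {ι : Type*} (S : Finset ι) (x y : ι → ℝ) :
    ∑ t ∈ S, (x t - (1 / (#S : ℝ)) * ∑ s ∈ S, x s) * (y t - (1 / (#S : ℝ)) * ∑ s ∈ S, y s)
      = ∑ t ∈ S, x t * y t - (1 / (#S : ℝ)) * ∑ s ∈ S, ∑ r ∈ S, x s * y r := by
  rcases S.eq_empty_or_nonempty with rfl | hS
  · simp
  have hS0 : (#S : ℝ) ≠ 0 := by exact_mod_cast hS.card_pos.ne'
  simp only [sub_mul, mul_sub, sum_sub_distrib, ← mul_sum, ← sum_mul, sum_const, nsmul_eq_mul]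
  field_simp
  ring

theorem sum_Icc_sum_Icc_ite_pow {R : Type*} [Semiring R] (φ : R) (T : ℕ) :
    ∑ s ∈ Icc 1 T, ∑ r ∈ Icc 1 T, (if r ≤ s - 1 then φ ^ (s - 1 - r) else 0)
      = ∑ l ∈ range (T - 1), ∑ j ∈ range (l + 1), φ ^ j := by
  induction T with
  | zero => simp
  | succ T ih =>
    have hrow : ∑ r ∈ Icc 1 T, (if r ≤ T + 1 - 1 then φ ^ (T + 1 - 1 - r) else 0)
        = ∑ j ∈ range T, φ ^ j := by
      rw [← Ico_add_one_right_eq_Icc, sum_Ico_eq_sum_range, ← sum_range_reflect]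
      refine sum_congr rfl fun j hj => ?_
      rw [mem_range] at hj
      rw [if_pos (by omega)]
      congr 1
      omega
    have hlast : ∀ s ∈ Icc 1 (T + 1),
        ∑ r ∈ Icc 1 (T + 1), (if r ≤ s - 1 then φ ^ (s - 1 - r) else 0)
          = ∑ r ∈ Icc 1 T, (if r ≤ s - 1 then φ ^ (s - 1 - r) else 0) := by
      intro s hs
      rw [mem_Icc] at hs
      rw [sum_Icc_succ_top (by omega), if_neg (by omega), add_zero]
    rw [sum_congr rfl hlast, sum_Icc_succ_top (by omega), ih, hrow]
    rcases T with _ | T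
    · simp
    · simp [sum_range_succ]

section Moments

variable {Ω : Type*} [MeasurableSpace Ω] {μ : Measure Ω}

theorem ProbabilityTheory.IndepFun.integral_mul_eq_zero {X Y : Ω → ℝ} (h : IndepFun X Y μ)
    (hX : AEStronglyMeasurable X μ) (hY : AEStronglyMeasurable Y μ) (hY0 : ∫ ω, Y ω ∂μ = 0) :
    ∫ ω, X ω * Y ω ∂μ = 0 := by
  simpa [hY0] using h.integral_mul_eq_mul_integral hX hY

theorem integral_const_add_mul_add_mul [IsFiniteMeasure μ] {y w g : Ω → ℝ} (c ρ : ℝ)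
    (hy : MemLp y 2 μ) (hw : MemLp w 2 μ) (hg : MemLp g 2 μ) (hg0 : ∫ ω, g ω ∂μ = 0) :
    ∫ ω, (c + ρ * y ω + w ω) * g ω ∂μ = ρ * ∫ ω, y ω * g ω ∂μ + ∫ ω, w ω * g ω ∂μ := by
  have hgi : Integrable g μ := hg.integrable one_le_two
  have hygi : Integrable (fun ω => y ω * g ω) μ := hy.integrable_mul hg
  have hwgi : Integrable (fun ω => w ω * g ω) μ := hw.integrable_mul hg
  have hcygi : Integrable (fun ω => c * g ω + ρ * (y ω * g ω)) μ :=
    (hgi.const_mul c).add (hygi.const_mul ρ)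
  simp_rw [add_mul, mul_assoc]
  rw [integral_add hcygi hwgi, integral_add (hgi.const_mul c) (hygi.const_mul ρ),
    integral_const_mul, integral_const_mul, hg0, mul_zero, zero_add]

section WithinMoment

variable {ι : Type*} (S : Finset ι) {f f' g : ι → Ω → ℝ}

theorem integral_sum_sub_mean_mul_sub_mean
    (hfg : ∀ s ∈ S, ∀ r ∈ S, Integrable (fun ω => f s ω * g r ω) μ) :
    ∫ ω, (1 / (#S : ℝ)) * ∑ t ∈ S, (f t ω - (1 / (#S : ℝ)) * ∑ s ∈ S, f s ω)
        * (g t ω - (1 / (#S : ℝ)) * ∑ s ∈ S, g s ω) ∂μ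
      = (1 / (#S : ℝ)) * (∑ t ∈ S, ∫ ω, f t ω * g t ω ∂μ
          - (1 / (#S : ℝ)) * ∑ s ∈ S, ∑ r ∈ S, ∫ ω, f s ω * g r ω ∂μ) := by
  have hrow : ∀ s ∈ S, Integrable (fun ω => ∑ r ∈ S, f s ω * g r ω) μ :=
    fun s hs => integrable_finsetSum _ (hfg s hs)
  have hdiag : ∀ t ∈ S, Integrable (fun ω => f t ω * g t ω) μ := fun t ht => hfg t ht t ht
  simp_rw [sum_sub_mean_mul_sub_mean S (f · _) (g · _)]
  rw [integral_const_mul, integral_sub (integrable_finsetSum _ hdiag)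
      ((integrable_finsetSum _ hrow).const_mul _), integral_const_mul,
    integral_finsetSum _ hdiag, integral_finsetSum _ hrow]
  congr 3
  exact sum_congr rfl fun s hs => integral_finsetSum _ (hfg s hs)

theorem integral_sum_sub_mean_mul_sub_mean_eq_mul (c : ℝ)
    (hfg : ∀ s ∈ S, ∀ r ∈ S, Integrable (fun ω => f s ω * g r ω) μ)
    (hf'g : ∀ s ∈ S, ∀ r ∈ S, Integrable (fun ω => f' s ω * g r ω) μ)
    (h : ∀ s ∈ S, ∀ r ∈ S, ∫ ω, f s ω * g r ω ∂μ = c * ∫ ω, f' s ω * g r ω ∂μ) :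
    ∫ ω, (1 / (#S : ℝ)) * ∑ t ∈ S, (f t ω - (1 / (#S : ℝ)) * ∑ s ∈ S, f s ω)
        * (g t ω - (1 / (#S : ℝ)) * ∑ s ∈ S, g s ω) ∂μ
      = c * ∫ ω, (1 / (#S : ℝ)) * ∑ t ∈ S, (f' t ω - (1 / (#S : ℝ)) * ∑ s ∈ S, f' s ω)
        * (g t ω - (1 / (#S : ℝ)) * ∑ s ∈ S, g s ω) ∂μ := by
  rw [integral_sum_sub_mean_mul_sub_mean S hfg, integral_sum_sub_mean_mul_sub_mean S hf'g,
    sum_congr rfl fun t ht => h t ht t ht,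
    sum_congr rfl fun s hs => sum_congr rfl fun r hr => h s hs r hr]
  simp only [← mul_sum]
  ring

end WithinMoment

theorem integral_sum_sub_mean_mul_sub_mean_of_integral_mul_eq_ite_pow (T : ℕ) {f g : ℕ → Ω → ℝ}
    {φ σ : ℝ} (hfg : ∀ s ∈ Icc 1 T, ∀ r ∈ Icc 1 T, Integrable (fun ω => f s ω * g r ω) μ)
    (h : ∀ s ∈ Icc 1 T, ∀ r ∈ Icc 1 T,
      ∫ ω, f s ω * g r ω ∂μ = (if r ≤ s - 1 then φ ^ (s - 1 - r) else 0) * σ) :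
    ∫ ω, (1 / (T : ℝ)) * ∑ t ∈ Icc 1 T, (f t ω - (1 / (T : ℝ)) * ∑ s ∈ Icc 1 T, f s ω)
        * (g t ω - (1 / (T : ℝ)) * ∑ s ∈ Icc 1 T, g s ω) ∂μ
      = -(σ / (T : ℝ) ^ 2) * ∑ l ∈ range (T - 1), ∑ j ∈ range (l + 1), φ ^ j := by
  have hdiag : ∀ t ∈ Icc 1 T, ∫ ω, f t ω * g t ω ∂μ = 0 := fun t ht => by
    rw [h t ht t ht, if_neg (by simp at ht; omega), zero_mul]
  have hcard : (#(Icc 1 T) : ℝ) = T := by simp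
  rw [← hcard, integral_sum_sub_mean_mul_sub_mean _ hfg, sum_eq_zero hdiag,
    sum_congr rfl fun s hs => sum_congr rfl fun r hr => h s hs r hr]
  simp only [← sum_mul, sum_Icc_sum_Icc_ite_pow, hcard]
  ring

section ShiftedPairs

variable {ε u : ℕ → Ω → ℝ} {T s t : ℕ}

theorem indepFun_of_iIndepFun_sum_elim_inl_inl
    (h : iIndepFun (m := fun _ : Fin T ⊕ Fin T => (inferInstance : MeasurableSpace ℝ))
      (Sum.elim (fun t : Fin T => ε (t + 1)) (fun t : Fin T => u (t + 1))) μ)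
    (hs : s ∈ Icc 1 T) (ht : t ∈ Icc 1 T) (hst : s ≠ t) : IndepFun (ε s) (ε t) μ := by
  rw [mem_Icc] at hs ht
  have := h.indepFun (i := .inl ⟨s - 1, by omega⟩) (j := .inl ⟨t - 1, by omega⟩)
    (by simp [Fin.ext_iff]; omega)
  simpa [Nat.sub_add_cancel hs.1, Nat.sub_add_cancel ht.1] using this

theorem indepFun_of_iIndepFun_sum_elim_inr_inl
    (h : iIndepFun (m := fun _ : Fin T ⊕ Fin T => (inferInstance : MeasurableSpace ℝ))
      (Sum.elim (fun t : Fin T => ε (t + 1)) (fun t : Fin T => u (t + 1))) μ)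
    (hs : s ∈ Icc 1 T) (ht : t ∈ Icc 1 T) : IndepFun (u s) (ε t) μ := by
  rw [mem_Icc] at hs ht
  have := h.indepFun (i := .inr ⟨s - 1, by omega⟩) (j := .inl ⟨t - 1, by omega⟩) (by simp)
  simpa [Nat.sub_add_cancel hs.1, Nat.sub_add_cancel ht.1] using this

theorem integral_add_const_mul_mul_of_iIndepFun_sum_elim {τ σ : ℝ}
    (h : iIndepFun (m := fun _ : Fin T ⊕ Fin T => (inferInstance : MeasurableSpace ℝ))
      (Sum.elim (fun t : Fin T => ε (t + 1)) (fun t : Fin T => u (t + 1))) μ)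
    (hε : ∀ t ∈ Icc 1 T, MemLp (ε t) 2 μ) (hu : ∀ t ∈ Icc 1 T, MemLp (u t) 2 μ)
    (hε0 : ∀ t ∈ Icc 1 T, ∫ ω, ε t ω ∂μ = 0) (hεvar : ∀ t ∈ Icc 1 T, ∫ ω, ε t ω ^ 2 ∂μ = σ)
    (hs : s ∈ Icc 1 T) (ht : t ∈ Icc 1 T) :
    ∫ ω, (ε s ω + τ * u s ω) * ε t ω ∂μ = if s = t then σ else 0 := by
  have hεε : ∫ ω, ε s ω * ε t ω ∂μ = if s = t then σ else 0 := by
    split_ifs with hst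
    · subst hst
      simpa only [sq] using hεvar s hs
    · exact (indepFun_of_iIndepFun_sum_elim_inl_inl h hs ht hst).integral_mul_eq_zero
        (hε s hs).1 (hε t ht).1 (hε0 t ht)
  have huε : ∫ ω, u s ω * ε t ω ∂μ = 0 :=
    (indepFun_of_iIndepFun_sum_elim_inr_inl h hs ht).integral_mul_eq_zero
      (hu s hs).1 (hε t ht).1 (hε0 t ht)
  simp_rw [add_mul, mul_assoc]
  have hεεi : Integrable (fun ω => ε s ω * ε t ω) μ := (hε s hs).integrable_mul (hε t ht)
  have huεi : Integrable (fun ω => u s ω * ε t ω) μ := (hu s hs).integrable_mul (hε t ht)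
  rw [integral_add hεεi (huεi.const_mul τ), integral_const_mul, huε, hεε]
  simp

end ShiftedPairs

section AR1

variable {x v : ℕ → Ω → ℝ} {α φ x₀ : ℝ} {K : ℕ}

theorem memLp_of_ar1_recursion [IsFiniteMeasure μ] {p : ENNReal} (hx0 : ∀ ω, x 0 ω = x₀)
    (hrec : ∀ k < K, ∀ ω, x (k + 1) ω = α + φ * x k ω + v (k + 1) ω)
    (hv : ∀ s ∈ Icc 1 K, MemLp (v s) p μ) : ∀ k ≤ K, MemLp (x k) p μ := by
  intro k
  induction k with
  | zero => exact fun _ => (funext hx0 : x 0 = fun _ => x₀) ▸ memLp_const x₀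
  | succ k ih =>
    intro hk
    rw [funext (hrec k hk)]
    exact ((memLp_const α).add ((ih (by omega)).const_mul φ)).add (hv (k + 1) (by simp; omega))

theorem integral_mul_of_ar1_recursion [IsFiniteMeasure μ] {g : Ω → ℝ} {σ : ℝ} {t : ℕ}
    (ht : 1 ≤ t) (hx0 : ∀ ω, x 0 ω = x₀)
    (hrec : ∀ k < K, ∀ ω, x (k + 1) ω = α + φ * x k ω + v (k + 1) ω)
    (hv : ∀ s ∈ Icc 1 K, MemLp (v s) 2 μ) (hg : MemLp g 2 μ) (hg0 : ∫ ω, g ω ∂μ = 0)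
    (hvg : ∀ s ∈ Icc 1 K, ∫ ω, v s ω * g ω ∂μ = if s = t then σ else 0) :
    ∀ k ≤ K, ∫ ω, x k ω * g ω ∂μ = (if t ≤ k then φ ^ (k - t) else 0) * σ := by
  intro k
  induction k with
  | zero => intro _; simp [hx0, integral_const_mul, hg0, show ¬ t ≤ 0 by omega]
  | succ k ih =>
    intro hk
    have hvk : k + 1 ∈ Icc 1 K := by simp; omega
    have hxk := memLp_of_ar1_recursion hx0 hrec hv k (by omega)
    simp_rw [hrec k hk]
    rw [integral_const_add_mul_add_mul α φ hxk (hv _ hvk) hg hg0, ih (by omega), hvg _ hvk]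
    rcases lt_trichotomy t (k + 1) with h | rfl | h
    · rw [if_pos (show t ≤ k by omega), if_neg (show k + 1 ≠ t by omega),
        if_pos (show t ≤ k + 1 by omega), show k + 1 - t = k - t + 1 by omega, pow_succ]
      ring
    · simp
    · rw [if_neg (show ¬ t ≤ k by omega), if_neg (show k + 1 ≠ t by omega),
        if_neg (show ¬ t ≤ k + 1 by omega)]
      ring

end AR1

end Moments

theorem bias_correction_term_tau_general {Ω : Type*} [MeasurableSpace Ω]
    (μ : Measure Ω) [IsProbabilityMeasure μ] (T : ℕ)
    (ρ₁ τ ρ₂ φ a c Y₀ σε2 : ℝ) (hφ : φ = ρ₁ + τ * ρ₂)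
    (ε u : ℕ → Ω → ℝ)
    (hεL2 : ∀ t : ℕ, 1 ≤ t → t ≤ T → MemLp (ε t) 2 μ)
    (huL2 : ∀ t : ℕ, 1 ≤ t → t ≤ T → MemLp (u t) 2 μ)
    (hindep : iIndepFun (m := fun _ : Fin T ⊕ Fin T => (inferInstance : MeasurableSpace ℝ))
      (Sum.elim (fun t : Fin T => ε (t + 1)) (fun t : Fin T => u (t + 1))) μ)
    (hεmean : ∀ t : ℕ, 1 ≤ t → t ≤ T → ∫ ω, ε t ω ∂μ = 0)
    (hεvar : ∀ t : ℕ, 1 ≤ t → t ≤ T → ∫ ω, (ε t ω) ^ 2 ∂μ = σε2)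
    (Y D : ℕ → Ω → ℝ) (hY0 : ∀ ω, Y 0 ω = Y₀)
    (hD : ∀ t : ℕ, 1 ≤ t → t ≤ T → ∀ ω, D t ω = c + ρ₂ * Y (t - 1) ω + u t ω)
    (hY : ∀ t : ℕ, 1 ≤ t → t ≤ T → ∀ ω,
      Y t ω = a + ρ₁ * Y (t - 1) ω + τ * D t ω + ε t ω):
    ∫ ω, (1 / (T : ℝ)) * ∑ t ∈ Icc 1 T,
        (D t ω - (1 / (T : ℝ)) * ∑ s ∈ Icc 1 T, D s ω)
          * (ε t ω - (1 / (T : ℝ)) * ∑ s ∈ Icc 1 T, ε s ω) ∂μ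
      = -ρ₂ * (σε2 / (T : ℝ) ^ 2) * ∑ l ∈ range (T - 1), ∑ j ∈ range (l + 1), φ ^ j ∧
    ∫ ω, (1 / (T : ℝ)) * ∑ t ∈ Icc 1 T,
        (D t ω - (1 / (T : ℝ)) * ∑ s ∈ Icc 1 T, D s ω)
          * (ε t ω - (1 / (T : ℝ)) * ∑ s ∈ Icc 1 T, ε s ω) ∂μ
      = ρ₂ * ∫ ω, (1 / (T : ℝ)) * ∑ t ∈ Icc 1 T,
          (Y (t - 1) ω - (1 / (T : ℝ)) * ∑ s ∈ Icc 1 T, Y (s - 1) ω)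
            * (ε t ω - (1 / (T : ℝ)) * ∑ s ∈ Icc 1 T, ε s ω) ∂μ := by
  simp only [← and_imp, ← mem_Icc] at hεL2 huL2 hεmean hεvar hD hY
  have hrec : ∀ k < T, ∀ ω,
      Y (k + 1) ω = (a + τ * c) + φ * Y k ω + (ε (k + 1) ω + τ * u (k + 1) ω) := by
    intro k hk ω
    have hk' : k + 1 ∈ Icc 1 T := by simp; omega
    rw [hY _ hk' ω, hD _ hk' ω, Nat.add_sub_cancel, hφ]
    ring
  have hv : ∀ s ∈ Icc 1 T, MemLp (fun ω => ε s ω + τ * u s ω) 2 μ :=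
    fun s hs => (hεL2 s hs).add ((huL2 s hs).const_mul τ)
  have hYL2 : ∀ s ∈ Icc 1 T, MemLp (Y (s - 1)) 2 μ := fun s hs =>
    memLp_of_ar1_recursion hY0 hrec hv _ (by simp at hs; omega)
  have hDL2 : ∀ s ∈ Icc 1 T, MemLp (D s) 2 μ := fun s hs => by
    rw [funext (hD s hs)]
    exact ((memLp_const c).add ((hYL2 s hs).const_mul ρ₂)).add (huL2 s hs)
  have hYε : ∀ s ∈ Icc 1 T, ∀ r ∈ Icc 1 T,
      ∫ ω, Y (s - 1) ω * ε r ω ∂μ = (if r ≤ s - 1 then φ ^ (s - 1 - r) else 0) * σε2 :=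
    fun s hs r hr => integral_mul_of_ar1_recursion (by simp at hr; omega) hY0 hrec hv (hεL2 r hr)
      (hεmean r hr) (fun s' hs' => integral_add_const_mul_mul_of_iIndepFun_sum_elim hindep hεL2
        huL2 hεmean hεvar hs' hr) _ (by simp at hs; omega)
  have hDε : ∀ s ∈ Icc 1 T, ∀ r ∈ Icc 1 T,
      ∫ ω, D s ω * ε r ω ∂μ = ρ₂ * ∫ ω, Y (s - 1) ω * ε r ω ∂μ := fun s hs r hr => by
    simp_rw [hD s hs]
    rw [integral_const_add_mul_add_mul c ρ₂ (hYL2 s hs) (huL2 s hs) (hεL2 r hr) (hεmean r hr),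
      (indepFun_of_iIndepFun_sum_elim_inr_inl hindep hs hr).integral_mul_eq_zero
        (huL2 s hs).1 (hεL2 r hr).1 (hεmean r hr), add_zero]
  have hDY := integral_sum_sub_mean_mul_sub_mean_eq_mul (μ := μ) (Icc 1 T) (g := ε) ρ₂
    (fun s hs r hr => (hDL2 s hs).integrable_mul (hεL2 r hr))
    (fun s hs r hr => (hYL2 s hs).integrable_mul (hεL2 r hr)) hDε
  rw [show (#(Icc 1 T) : ℝ) = T by simp] at hDY
  refine ⟨?_, hDY⟩
  rw [hDY, integral_sum_sub_mean_mul_sub_mean_of_integral_mul_eq_ite_pow T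
    (fun s hs r hr => (hYL2 s hs).integrable_mul (hεL2 r hr)) hYε]
  ring

/-- Bias correction term for the treatment moment (second component of the Lemma
"Bias Correction Terms"):
`E[(1/T)·Σ_{t=1}^{T} D̃_t·ε̃_t] = −ρ₂·(σ_ε²/T²)·Σ_{l=0}^{T-2} Σ_{j=0}^{l} φ^j`; equivalently, it
equals `ρ₂` times the bias correction term for the lagged-outcome moment. -/
theorem bias_correction_term_tau {Ω : Type*} [MeasurableSpace Ω]
    (μ : Measure Ω) [IsProbabilityMeasure μ] (T : ℕ) (hT : 2 ≤ T)
    (ρ₁ τ ρ₂ φ a c Y₀ σε2 σu2 : ℝ) (hφ : φ = ρ₁ + τ * ρ₂)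
    (ε u : ℕ → Ω → ℝ)
    (hεmeas : ∀ t, Measurable (ε t)) (humeas : ∀ t, Measurable (u t))
    (hεL2 : ∀ t : ℕ, 1 ≤ t → t ≤ T → MemLp (ε t) 2 μ)
    (huL2 : ∀ t : ℕ, 1 ≤ t → t ≤ T → MemLp (u t) 2 μ)
    (hindep : iIndepFun (m := fun _ : Fin T ⊕ Fin T => (inferInstance : MeasurableSpace ℝ))
      (Sum.elim (fun t : Fin T => ε (t + 1)) (fun t : Fin T => u (t + 1))) μ)
    (hεmean : ∀ t : ℕ, 1 ≤ t → t ≤ T → ∫ ω, ε t ω ∂μ = 0)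
    (humean : ∀ t : ℕ, 1 ≤ t → t ≤ T → ∫ ω, u t ω ∂μ = 0)
    (hεvar : ∀ t : ℕ, 1 ≤ t → t ≤ T → ∫ ω, (ε t ω) ^ 2 ∂μ = σε2)
    (huvar : ∀ t : ℕ, 1 ≤ t → t ≤ T → ∫ ω, (u t ω) ^ 2 ∂μ = σu2)
    (Y D : ℕ → Ω → ℝ) (hY0 : ∀ ω, Y 0 ω = Y₀)
    (hD : ∀ t : ℕ, 1 ≤ t → t ≤ T → ∀ ω, D t ω = c + ρ₂ * Y (t - 1) ω + u t ω)
    (hY : ∀ t : ℕ, 1 ≤ t → t ≤ T → ∀ ω,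
      Y t ω = a + ρ₁ * Y (t - 1) ω + τ * D t ω + ε t ω):
    ∫ ω, (1 / (T : ℝ)) * ∑ t ∈ Icc 1 T,
        (D t ω - (1 / (T : ℝ)) * ∑ s ∈ Icc 1 T, D s ω)
          * (ε t ω - (1 / (T : ℝ)) * ∑ s ∈ Icc 1 T, ε s ω) ∂μ
      = -ρ₂ * (σε2 / (T : ℝ) ^ 2) * ∑ l ∈ range (T - 1), ∑ j ∈ range (l + 1), φ ^ j ∧
    ∫ ω, (1 / (T : ℝ)) * ∑ t ∈ Icc 1 T,
        (D t ω - (1 / (T : ℝ)) * ∑ s ∈ Icc 1 T, D s ω)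
          * (ε t ω - (1 / (T : ℝ)) * ∑ s ∈ Icc 1 T, ε s ω) ∂μ
      = ρ₂ * ∫ ω, (1 / (T : ℝ)) * ∑ t ∈ Icc 1 T,
          (Y (t - 1) ω - (1 / (T : ℝ)) * ∑ s ∈ Icc 1 T, Y (s - 1) ω)
            * (ε t ω - (1 / (T : ℝ)) * ∑ s ∈ Icc 1 T, ε s ω) ∂μ :=
  bias_correction_term_tau_general μ T ρ₁ τ ρ₂ φ a c Y₀ σε2 hφ ε u hεL2 huL2 hindep hεmean hεvar Y D
    hY0 hD hY
end

section
/- Bias correction term for the treatment-equation moment (Lemma 'Bias Correction Terms', third component): E[(1/T)·Σ_{t=1}^{T} Ỹ_{t-1}·ũ_t] = −τ·(σ_u²/T²)·Σ_{l=0}^{T-2} Σ_{j=0}^{l} φ^j. -/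
open Finset MeasureTheory ProbabilityTheory

/-! Substituting the treatment equation makes `Y` an AR(1) process
`Y_t = (a + τc) + φ Y_{t-1} + (τ u_t + ε_t)`, so `Cov(Y_k, u_t) = τ σ_u² φ^(k-t)` for `t ≤ k` and
`0` for `t > k`. Since `u` has mean zero, the expected within-product equals
`Σ_t Cov(Y_{t-1}, u_t) - (1/T) Σ_s Cov(Y_{s-1}, Σ_t u_t)`; the first sum vanishes because
`Y_{t-1}` predates `u_t`, and the second is `τ σ_u² Σ_s Σ_{j < s-1} φ^j`. -/

theorem sum_centered_mul_centered {ι K : Type*} [Field K] (s : Finset ι) (x y : ι → K) :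
    ∑ i ∈ s, (x i - 1 / #s * ∑ j ∈ s, x j) * (y i - 1 / #s * ∑ j ∈ s, y j)
      = ∑ i ∈ s, x i * y i - 1 / #s * ∑ i ∈ s, x i * ∑ j ∈ s, y j := by
  by_cases hs : (#s : K) = 0
  · simp [hs]
  · simp only [sub_mul, mul_sub, sum_sub_distrib, ← mul_sum, ← sum_mul, sum_const, nsmul_eq_mul]
    field_simp
    ring

theorem sum_Icc_pow_sub {R : Type*} [CommSemiring R] (φ : R) (k : ℕ) :
    ∑ i ∈ Icc 1 k, φ ^ (k - i) = ∑ j ∈ range k, φ ^ j :=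
  sum_nbij' (fun i => k - i) (fun j => k - j) (by simp; omega) (by simp; omega)
    (by simp; omega) (by simp; omega) (fun _ _ => rfl)

theorem sum_Icc_ite_le_pow {R : Type*} [CommSemiring R] (φ : R) {k n : ℕ} (hk : k ≤ n) :
    ∑ t ∈ Icc 1 n, (if t ≤ k then φ ^ (k - t) else 0) = ∑ j ∈ range k, φ ^ j := by
  have hfilter : {t ∈ Icc 1 n | t ≤ k} = Icc 1 k := by
    ext t
    simp only [mem_filter, mem_Icc]
    omega
  rw [← sum_filter, hfilter, sum_Icc_pow_sub]

theorem sum_Icc_sum_range_pred {M : Type*} [AddCommMonoid M] (f : ℕ → M) (n : ℕ) :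
    ∑ s ∈ Icc 1 n, ∑ j ∈ range (s - 1), f j = ∑ l ∈ range (n - 1), ∑ j ∈ range (l + 1), f j := by
  induction n with
  | zero => simp
  | succ n ih =>
    rw [sum_Icc_succ_top (by omega), ih]
    cases n with
    | zero => simp
    | succ n => simp [sum_range_succ]

theorem exists_fin_add_one_eq {T i : ℕ} (hi : i ∈ Icc 1 T) : ∃ j : Fin T, (j : ℕ) + 1 = i :=
  ⟨⟨i - 1, by grind⟩, by grind⟩

theorem ar1_eq_pow_mul_add_sum {R : Type*} [CommRing R] {y e : ℕ → R} {φ : R} {n : ℕ}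
    (h : ∀ k < n, y (k + 1) = φ * y k + e (k + 1)) :
    ∀ k ≤ n, y k = φ ^ k * y 0 + ∑ i ∈ Icc 1 k, φ ^ (k - i) * e i := by
  intro k hk
  induction k with
  | zero => simp
  | succ k ih =>
    have hpow : ∀ i ∈ Icc 1 k, φ ^ (k + 1 - i) * e i = φ * (φ ^ (k - i) * e i) := by
      intro i hi
      rw [Nat.sub_add_comm (mem_Icc.mp hi).2, pow_succ]
      ring
    rw [h k hk, ih (by omega), sum_Icc_succ_top (by omega), sum_congr rfl hpow, ← mul_sum]
    simp only [Nat.sub_self, pow_zero, pow_succ]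
    ring

namespace ProbabilityTheory

variable {Ω : Type*} [MeasurableSpace Ω] {μ : Measure Ω}

theorem integral_mul_eq_covariance [IsProbabilityMeasure μ] {X W : Ω → ℝ}
    (hX : MemLp X 2 μ) (hW : MemLp W 2 μ) (hW0 : μ[W] = 0) :
    ∫ ω, X ω * W ω ∂μ = cov[X, W; μ] := by
  rw [covariance_eq_sub hX hW, hW0, mul_zero, sub_zero]
  rfl

theorem covariance_const_add_mul_add_left [IsProbabilityMeasure μ] {X Z W : Ω → ℝ}
    (hX : MemLp X 2 μ) (hZ : MemLp Z 2 μ) (hW : MemLp W 2 μ) (α φ : ℝ) :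
    cov[fun ω => α + φ * X ω + Z ω, W; μ] = φ * cov[X, W; μ] + cov[Z, W; μ] := by
  have hsplit : (fun ω => α + φ * X ω + Z ω) = fun ω => α + (φ • X + Z) ω := by
    ext ω
    simp [add_assoc]
  rw [hsplit, covariance_const_add_left (((hX.const_smul φ).add hZ).integrable one_le_two),
    covariance_add_left (hX.const_smul φ) hZ hW, covariance_smul_left]

theorem integral_sum_centered_mul_centered [IsProbabilityMeasure μ] {ι : Type*} (s : Finset ι)
    {X W : ι → Ω → ℝ} (hX : ∀ i ∈ s, MemLp (X i) 2 μ) (hW : ∀ i ∈ s, MemLp (W i) 2 μ)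
    (hW0 : ∀ i ∈ s, μ[W i] = 0) :
    ∫ ω, ∑ i ∈ s, (X i ω - 1 / #s * ∑ j ∈ s, X j ω) * (W i ω - 1 / #s * ∑ j ∈ s, W j ω) ∂μ
      = ∑ i ∈ s, cov[X i, W i; μ] - 1 / #s * ∑ i ∈ s, cov[X i, fun ω => ∑ j ∈ s, W j ω; μ] := by
  have hS : MemLp (fun ω => ∑ j ∈ s, W j ω) 2 μ := memLp_finsetSum s hW
  have hS0 : μ[fun ω => ∑ j ∈ s, W j ω] = 0 := by
    rw [integral_finsetSum s fun j hj => (hW j hj).integrable one_le_two]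
    exact sum_eq_zero hW0
  have hXW : ∀ i ∈ s, Integrable (fun ω => X i ω * W i ω) μ :=
    fun i hi => (hX i hi).integrable_mul (hW i hi)
  have hXS : ∀ i ∈ s, Integrable (fun ω => X i ω * ∑ j ∈ s, W j ω) μ :=
    fun i hi => (hX i hi).integrable_mul hS
  simp_rw [sum_centered_mul_centered]
  rw [integral_sub (integrable_finsetSum s hXW) ((integrable_finsetSum s hXS).const_mul _),
    integral_const_mul, integral_finsetSum s hXW, integral_finsetSum s hXS]
  congr 1
  · exact sum_congr rfl fun i hi => integral_mul_eq_covariance (hX i hi) (hW i hi) (hW0 i hi)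
  · congr 1
    exact sum_congr rfl fun i hi => integral_mul_eq_covariance (hX i hi) hS hS0

section AR1

variable [IsProbabilityMeasure μ] {Y η : ℕ → Ω → ℝ} {α φ y₀ : ℝ} {n : ℕ}

theorem memLp_ar1 (hY0 : Y 0 = fun _ => y₀)
    (hY : ∀ k < n, Y (k + 1) = fun ω => α + φ * Y k ω + η (k + 1) ω)
    (hη : ∀ k < n, MemLp (η (k + 1)) 2 μ) :
    ∀ k ≤ n, MemLp (Y k) 2 μ := by
  intro k hk
  induction k with
  | zero => exact hY0 ▸ memLp_const y₀
  | succ k ih =>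
    rw [hY k hk]
    exact ((memLp_const α).add ((ih (by omega)).const_mul φ)).add (hη k hk)

theorem covariance_ar1_eq_sum (hY0 : Y 0 = fun _ => y₀)
    (hY : ∀ k < n, Y (k + 1) = fun ω => α + φ * Y k ω + η (k + 1) ω)
    (hη : ∀ k < n, MemLp (η (k + 1)) 2 μ) {W : Ω → ℝ} (hW : MemLp W 2 μ) :
    ∀ k ≤ n, cov[Y k, W; μ] = ∑ i ∈ Icc 1 k, φ ^ (k - i) * cov[η i, W; μ] := by
  have hrec : ∀ k < n, cov[Y (k + 1), W; μ] = φ * cov[Y k, W; μ] + cov[η (k + 1), W; μ] := by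
    intro k hk
    rw [hY k hk, covariance_const_add_mul_add_left
      (memLp_ar1 hY0 hY hη k hk.le) (hη k hk) hW]
  intro k hk
  rw [ar1_eq_pow_mul_add_sum (y := fun k => cov[Y k, W; μ])
    (e := fun i => cov[η i, W; μ]) hrec k hk, hY0, covariance_const_left, mul_zero, zero_add]

end AR1

end ProbabilityTheory

section Model

variable {Ω : Type*} {T : ℕ} {ε u : ℕ → Ω → ℝ} {ρ₁ τ ρ₂ φ a c Y₀ : ℝ} {Y D : ℕ → Ω → ℝ}

def innovation (τ : ℝ) (u ε : ℕ → Ω → ℝ) (t : ℕ) : Ω → ℝ := τ • u t + ε t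

theorem Y_succ_eq_ar1 (hφ : φ = ρ₁ + τ * ρ₂)
    (hD : ∀ t : ℕ, 1 ≤ t → t ≤ T → ∀ ω, D t ω = c + ρ₂ * Y (t - 1) ω + u t ω)
    (hY : ∀ t : ℕ, 1 ≤ t → t ≤ T → ∀ ω,
      Y t ω = a + ρ₁ * Y (t - 1) ω + τ * D t ω + ε t ω) :
    ∀ k < T, Y (k + 1) = fun ω => (a + τ * c) + φ * Y k ω + innovation τ u ε (k + 1) ω := by
  intro k hk
  funext ω
  rw [hY (k + 1) (by omega) hk ω, hD (k + 1) (by omega) hk ω, hφ, Nat.add_sub_cancel]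
  simp only [innovation, Pi.add_apply, Pi.smul_apply, smul_eq_mul]
  ring

variable [MeasurableSpace Ω] {μ : Measure Ω}

theorem covariance_u_u_eq [IsProbabilityMeasure μ]
    (huL2 : ∀ t : ℕ, 1 ≤ t → t ≤ T → MemLp (u t) 2 μ)
    (hindep : iIndepFun
      (Sum.elim (fun t : Fin T => ε (t + 1)) (fun t : Fin T => u (t + 1))) μ)
    (humean : ∀ t : ℕ, 1 ≤ t → t ≤ T → ∫ ω, u t ω ∂μ = 0) {σu2 : ℝ}
    (huvar : ∀ t : ℕ, 1 ≤ t → t ≤ T → ∫ ω, (u t ω) ^ 2 ∂μ = σu2)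
    {i t : ℕ} (hi : i ∈ Icc 1 T) (ht : t ∈ Icc 1 T) :
    cov[u i, u t; μ] = if i = t then σu2 else 0 := by
  obtain ⟨hi1, hiT⟩ := mem_Icc.mp hi
  split_ifs with hit
  · subst hit
    rw [covariance_self (huL2 i hi1 hiT).aemeasurable,
      variance_of_integral_eq_zero (huL2 i hi1 hiT).aemeasurable (humean i hi1 hiT),
      huvar i hi1 hiT]
  · obtain ⟨i', rfl⟩ := exists_fin_add_one_eq hi
    obtain ⟨t', rfl⟩ := exists_fin_add_one_eq ht
    have hne : (Sum.inr i' : Fin T ⊕ Fin T) ≠ Sum.inr t' := by simpa [Fin.ext_iff] using hit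
    exact (hindep.indepFun hne).covariance_eq_zero (huL2 _ hi1 hiT)
      (huL2 _ (mem_Icc.mp ht).1 (mem_Icc.mp ht).2)

theorem covariance_ε_u_eq_zero (hεL2 : ∀ t : ℕ, 1 ≤ t → t ≤ T → MemLp (ε t) 2 μ)
    (huL2 : ∀ t : ℕ, 1 ≤ t → t ≤ T → MemLp (u t) 2 μ)
    (hindep : iIndepFun
      (Sum.elim (fun t : Fin T => ε (t + 1)) (fun t : Fin T => u (t + 1))) μ)
    {i t : ℕ} (hi : i ∈ Icc 1 T) (ht : t ∈ Icc 1 T) :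
    cov[ε i, u t; μ] = 0 := by
  obtain ⟨i', rfl⟩ := exists_fin_add_one_eq hi
  obtain ⟨t', rfl⟩ := exists_fin_add_one_eq ht
  exact (hindep.indepFun (Sum.inl_ne_inr (a := i') (b := t'))).covariance_eq_zero
    (hεL2 _ (mem_Icc.mp hi).1 (mem_Icc.mp hi).2) (huL2 _ (mem_Icc.mp ht).1 (mem_Icc.mp ht).2)

theorem covariance_innovation_u_eq [IsProbabilityMeasure μ]
    (hεL2 : ∀ t : ℕ, 1 ≤ t → t ≤ T → MemLp (ε t) 2 μ)
    (huL2 : ∀ t : ℕ, 1 ≤ t → t ≤ T → MemLp (u t) 2 μ)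
    (hindep : iIndepFun
      (Sum.elim (fun t : Fin T => ε (t + 1)) (fun t : Fin T => u (t + 1))) μ)
    (humean : ∀ t : ℕ, 1 ≤ t → t ≤ T → ∫ ω, u t ω ∂μ = 0) {σu2 : ℝ}
    (huvar : ∀ t : ℕ, 1 ≤ t → t ≤ T → ∫ ω, (u t ω) ^ 2 ∂μ = σu2)
    {i t : ℕ} (hi : i ∈ Icc 1 T) (ht : t ∈ Icc 1 T) :
    cov[innovation τ u ε i, u t; μ] = if i = t then τ * σu2 else 0 := by
  obtain ⟨hi1, hiT⟩ := mem_Icc.mp hi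
  rw [innovation, covariance_add_left ((huL2 i hi1 hiT).const_smul τ) (hεL2 i hi1 hiT)
      (huL2 t (mem_Icc.mp ht).1 (mem_Icc.mp ht).2), covariance_smul_left,
    covariance_u_u_eq huL2 hindep humean huvar hi ht, covariance_ε_u_eq_zero hεL2 huL2 hindep hi ht,
    mul_ite, mul_zero, add_zero]

theorem memLp_innovation (hεL2 : ∀ t : ℕ, 1 ≤ t → t ≤ T → MemLp (ε t) 2 μ)
    (huL2 : ∀ t : ℕ, 1 ≤ t → t ≤ T → MemLp (u t) 2 μ) :
    ∀ k < T, MemLp (innovation τ u ε (k + 1)) 2 μ := fun k hk =>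
  ((huL2 (k + 1) (by omega) hk).const_smul τ).add (hεL2 (k + 1) (by omega) hk)

theorem covariance_Y_u_eq [IsProbabilityMeasure μ] (hφ : φ = ρ₁ + τ * ρ₂)
    (hεL2 : ∀ t : ℕ, 1 ≤ t → t ≤ T → MemLp (ε t) 2 μ)
    (huL2 : ∀ t : ℕ, 1 ≤ t → t ≤ T → MemLp (u t) 2 μ)
    (hindep : iIndepFun
      (Sum.elim (fun t : Fin T => ε (t + 1)) (fun t : Fin T => u (t + 1))) μ)
    (humean : ∀ t : ℕ, 1 ≤ t → t ≤ T → ∫ ω, u t ω ∂μ = 0) {σu2 : ℝ}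
    (huvar : ∀ t : ℕ, 1 ≤ t → t ≤ T → ∫ ω, (u t ω) ^ 2 ∂μ = σu2)
    (hY0 : ∀ ω, Y 0 ω = Y₀)
    (hD : ∀ t : ℕ, 1 ≤ t → t ≤ T → ∀ ω, D t ω = c + ρ₂ * Y (t - 1) ω + u t ω)
    (hY : ∀ t : ℕ, 1 ≤ t → t ≤ T → ∀ ω,
      Y t ω = a + ρ₁ * Y (t - 1) ω + τ * D t ω + ε t ω)
    {k t : ℕ} (hk : k ≤ T) (ht : t ∈ Icc 1 T) :
    cov[Y k, u t; μ] = τ * σu2 * if t ≤ k then φ ^ (k - t) else 0 := by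
  have hinnov : ∀ i ∈ Icc 1 k, φ ^ (k - i) * cov[innovation τ u ε i, u t; μ]
      = if i = t then φ ^ (k - i) * (τ * σu2) else 0 := fun i hi => by
    rw [covariance_innovation_u_eq hεL2 huL2 hindep humean huvar
      (Icc_subset_Icc_right hk hi) ht, mul_ite, mul_zero]
  rw [covariance_ar1_eq_sum (funext hY0) (Y_succ_eq_ar1 hφ hD hY) (memLp_innovation hεL2 huL2)
      (huL2 t (mem_Icc.mp ht).1 (mem_Icc.mp ht).2) k hk, sum_congr rfl hinnov, sum_ite_eq']
  simp only [mem_Icc, (mem_Icc.mp ht).1, true_and]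
  split_ifs <;> ring

end Model

theorem bias_correction_term_rho2_general {Ω : Type*} [MeasurableSpace Ω]
    (μ : Measure Ω) [IsProbabilityMeasure μ] (T : ℕ)
    (ρ₁ τ ρ₂ φ a c Y₀ σu2 : ℝ) (hφ : φ = ρ₁ + τ * ρ₂)
    (ε u : ℕ → Ω → ℝ)
    (hεL2 : ∀ t : ℕ, 1 ≤ t → t ≤ T → MemLp (ε t) 2 μ)
    (huL2 : ∀ t : ℕ, 1 ≤ t → t ≤ T → MemLp (u t) 2 μ)
    (hindep : iIndepFun
      (Sum.elim (fun t : Fin T => ε (t + 1)) (fun t : Fin T => u (t + 1))) μ)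
    (humean : ∀ t : ℕ, 1 ≤ t → t ≤ T → ∫ ω, u t ω ∂μ = 0)
    (huvar : ∀ t : ℕ, 1 ≤ t → t ≤ T → ∫ ω, (u t ω) ^ 2 ∂μ = σu2)
    (Y D : ℕ → Ω → ℝ) (hY0 : ∀ ω, Y 0 ω = Y₀)
    (hD : ∀ t : ℕ, 1 ≤ t → t ≤ T → ∀ ω, D t ω = c + ρ₂ * Y (t - 1) ω + u t ω)
    (hY : ∀ t : ℕ, 1 ≤ t → t ≤ T → ∀ ω,
      Y t ω = a + ρ₁ * Y (t - 1) ω + τ * D t ω + ε t ω):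
    ∫ ω, (1 / (T : ℝ)) * ∑ t ∈ Icc 1 T,
        (Y (t - 1) ω - (1 / (T : ℝ)) * ∑ s ∈ Icc 1 T, Y (s - 1) ω)
          * (u t ω - (1 / (T : ℝ)) * ∑ s ∈ Icc 1 T, u s ω) ∂μ
      = -τ * (σu2 / (T : ℝ) ^ 2) * ∑ l ∈ range (T - 1), ∑ j ∈ range (l + 1), φ ^ j := by
  have hu : ∀ t ∈ Icc 1 T, MemLp (u t) 2 μ := fun t ht => huL2 t (mem_Icc.mp ht).1 (mem_Icc.mp ht).2
  have hYlag : ∀ t ∈ Icc 1 T, MemLp (Y (t - 1)) 2 μ := fun t ht =>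
    memLp_ar1 (funext hY0) (Y_succ_eq_ar1 hφ hD hY) (memLp_innovation hεL2 huL2) (t - 1) (by grind)
  have hcov : ∀ k ≤ T, ∀ t ∈ Icc 1 T,
      cov[Y k, u t; μ] = τ * σu2 * if t ≤ k then φ ^ (k - t) else 0 :=
    fun k hk t ht => covariance_Y_u_eq hφ hεL2 huL2 hindep humean huvar hY0 hD hY hk ht
  have hwithin := integral_sum_centered_mul_centered (Icc 1 T) hYlag hu
    fun t ht => humean t (mem_Icc.mp ht).1 (mem_Icc.mp ht).2
  rw [Nat.card_Icc, Nat.add_sub_cancel] at hwithin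
  have hcontemporaneous : ∑ t ∈ Icc 1 T, cov[Y (t - 1), u t; μ] = 0 :=
    sum_eq_zero fun t ht => by rw [hcov (t - 1) (by grind) t ht, if_neg (by grind), mul_zero]
  have hcross : ∑ s ∈ Icc 1 T, cov[Y (s - 1), fun ω => ∑ t ∈ Icc 1 T, u t ω; μ]
      = τ * σu2 * ∑ l ∈ range (T - 1), ∑ j ∈ range (l + 1), φ ^ j := by
    rw [← sum_Icc_sum_range_pred, mul_sum]
    refine sum_congr rfl fun s hs => ?_
    rw [covariance_fun_sum_right' hu (hYlag s hs), sum_congr rfl (hcov (s - 1) (by grind)),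
      ← mul_sum, sum_Icc_ite_le_pow φ (by grind)]
  rw [integral_const_mul, hwithin, hcontemporaneous, hcross]
  ring

/-- Bias correction term for the treatment-equation moment (third component of the Lemma
"Bias Correction Terms"):
`E[(1/T)·Σ_{t=1}^{T} Ỹ_{t-1}·ũ_t] = −τ·(σ_u²/T²)·Σ_{l=0}^{T-2} Σ_{j=0}^{l} φ^j`. -/
theorem bias_correction_term_rho2 {Ω : Type*} [MeasurableSpace Ω]
    (μ : Measure Ω) [IsProbabilityMeasure μ] (T : ℕ) (hT : 2 ≤ T)
    (ρ₁ τ ρ₂ φ a c Y₀ σε2 σu2 : ℝ) (hφ : φ = ρ₁ + τ * ρ₂)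
    (ε u : ℕ → Ω → ℝ)
    (hεmeas : ∀ t, Measurable (ε t)) (humeas : ∀ t, Measurable (u t))
    (hεL2 : ∀ t : ℕ, 1 ≤ t → t ≤ T → MemLp (ε t) 2 μ)
    (huL2 : ∀ t : ℕ, 1 ≤ t → t ≤ T → MemLp (u t) 2 μ)
    (hindep : iIndepFun
      (Sum.elim (fun t : Fin T => ε (t + 1)) (fun t : Fin T => u (t + 1))) μ)
    (hεmean : ∀ t : ℕ, 1 ≤ t → t ≤ T → ∫ ω, ε t ω ∂μ = 0)
    (humean : ∀ t : ℕ, 1 ≤ t → t ≤ T → ∫ ω, u t ω ∂μ = 0)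
    (hεvar : ∀ t : ℕ, 1 ≤ t → t ≤ T → ∫ ω, (ε t ω) ^ 2 ∂μ = σε2)
    (huvar : ∀ t : ℕ, 1 ≤ t → t ≤ T → ∫ ω, (u t ω) ^ 2 ∂μ = σu2)
    (Y D : ℕ → Ω → ℝ) (hY0 : ∀ ω, Y 0 ω = Y₀)
    (hD : ∀ t : ℕ, 1 ≤ t → t ≤ T → ∀ ω, D t ω = c + ρ₂ * Y (t - 1) ω + u t ω)
    (hY : ∀ t : ℕ, 1 ≤ t → t ≤ T → ∀ ω,
      Y t ω = a + ρ₁ * Y (t - 1) ω + τ * D t ω + ε t ω):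
    ∫ ω, (1 / (T : ℝ)) * ∑ t ∈ Icc 1 T,
        (Y (t - 1) ω - (1 / (T : ℝ)) * ∑ s ∈ Icc 1 T, Y (s - 1) ω)
          * (u t ω - (1 / (T : ℝ)) * ∑ s ∈ Icc 1 T, u s ω) ∂μ
      = -τ * (σu2 / (T : ℝ) ^ 2) * ∑ l ∈ range (T - 1), ∑ j ∈ range (l + 1), φ ^ j :=
  bias_correction_term_rho2_general μ T ρ₁ τ ρ₂ φ a c Y₀ σu2 hφ ε u hεL2 huL2 hindep humean huvar Y
    D hY0 hD hY
end
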